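/- For the reference triangle T̂ = {(x,y) : 0 < x < 1, 0 < y < 1-x} and positive integers j ≠ s, the functions Ŵ_{js} and Ŵ_{j's'} with {j,s} ≠ {j',s'} (as unordered pairs with j<s, j'<s') satisfy ∫_{T̂} Ŵ_{js}·Ŵ_{j's'} dx dy = 0. -/
import Mathlib

set_option maxHeartbeats 1000000

open Real MeasureTheory

namespace Stmt16Aux

/-- `∫ x in 0..1, cos (c*x) = sin c / c` for `c ≠ 0`. -/
lemma integral_cos_mul (c : ℝ) (hc : c ≠ 0) :
    ∫ x in (0:ℝ)..1, Real.cos (c * x) = Real.sin c / c := by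
  have h := intervalIntegral.mul_integral_comp_mul_left (f := Real.cos) (c := c) (a := (0:ℝ)) (b := 1)
  rw [integral_cos] at h
  have h' : c * ∫ x in (0:ℝ)..1, Real.cos (c * x) = Real.sin c := by
    rw [h]; simp
  rw [eq_div_iff hc, mul_comm]
  exact h'

/-- Orthogonality of sines on `(0,1)`. -/
lemma orth {m n : ℕ} (h : m ≠ n) :
    ∫ x in Set.Ioo (0:ℝ) 1, Real.sin ((m:ℝ) * π * x) * Real.sin ((n:ℝ) * π * x) = 0 := by
  have hIoo : ∫ x in Set.Ioo (0:ℝ) 1, Real.sin ((m:ℝ) * π * x) * Real.sin ((n:ℝ) * π * x)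
      = ∫ x in (0:ℝ)..1, Real.sin ((m:ℝ) * π * x) * Real.sin ((n:ℝ) * π * x) := by
    rw [intervalIntegral.integral_of_le zero_le_one, integral_Ioc_eq_integral_Ioo]
  rw [hIoo]
  have hpt : ∀ x : ℝ, Real.sin ((m:ℝ) * π * x) * Real.sin ((n:ℝ) * π * x)
      = (Real.cos (((m:ℝ) - n) * π * x) - Real.cos (((m:ℝ) + n) * π * x)) / 2 := by
    intro x
    have hcc := Real.cos_sub_cos (((m:ℝ) - n) * π * x) (((m:ℝ) + n) * π * x)
    have e1 : ((((m:ℝ) - n) * π * x) + (((m:ℝ) + n) * π * x)) / 2 = (m:ℝ) * π * x := by ring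
    have e2 : ((((m:ℝ) - n) * π * x) - (((m:ℝ) + n) * π * x)) / 2 = -((n:ℝ) * π * x) := by
      ring
    rw [e1, e2, Real.sin_neg] at hcc
    linarith
  simp only [hpt]
  have hc1 : ((m:ℝ) - n) * π ≠ 0 := by
    apply mul_ne_zero _ Real.pi_ne_zero
    exact sub_ne_zero.mpr (by exact_mod_cast h)
  have hc2 : ((m:ℝ) + n) * π ≠ 0 := by
    apply mul_ne_zero _ Real.pi_ne_zero
    have : m + n ≠ 0 := by omega
    exact_mod_cast (by exact_mod_cast Nat.cast_ne_zero.mpr this : ((m + n : ℕ) : ℝ) ≠ 0)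
  have i1 : IntervalIntegrable (fun x => Real.cos (((m:ℝ) - n) * π * x)) volume 0 1 := by
    apply Continuous.intervalIntegrable; fun_prop
  have i2 : IntervalIntegrable (fun x => Real.cos (((m:ℝ) + n) * π * x)) volume 0 1 := by
    apply Continuous.intervalIntegrable; fun_prop
  have hs1 : Real.sin (((m:ℝ) - n) * π) = 0 := by
    have := Real.sin_int_mul_pi ((m : ℤ) - n)
    push_cast at this
    exact this
  have hs2 : Real.sin (((m:ℝ) + n) * π) = 0 := by
    have := Real.sin_int_mul_pi ((m : ℤ) + n)
    push_cast at this
    exact this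
  have e1 : ∫ x in (0:ℝ)..1, Real.cos (((m:ℝ) - n) * π * x) = 0 := by
    have := integral_cos_mul (((m:ℝ) - n) * π) hc1
    simp only [mul_assoc] at this ⊢
    rw [this, hs1, zero_div]
  have e2 : ∫ x in (0:ℝ)..1, Real.cos (((m:ℝ) + n) * π * x) = 0 := by
    have := integral_cos_mul (((m:ℝ) + n) * π) hc2
    simp only [mul_assoc] at this ⊢
    rw [this, hs2, zero_div]
  rw [intervalIntegral.integral_div, intervalIntegral.integral_sub i1 i2, e1, e2]
  norm_num

/-- Double integral of a product over the square factors. -/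
lemma sq_int (a b c d : ℕ) :
    ∫ p in (Set.Ioo (0:ℝ) 1) ×ˢ (Set.Ioo (0:ℝ) 1),
      (Real.sin ((a:ℝ) * π * p.1) * Real.sin ((b:ℝ) * π * p.1)) *
      (Real.sin ((c:ℝ) * π * p.2) * Real.sin ((d:ℝ) * π * p.2))
    = (∫ x in Set.Ioo (0:ℝ) 1, Real.sin ((a:ℝ) * π * x) * Real.sin ((b:ℝ) * π * x)) *
      (∫ y in Set.Ioo (0:ℝ) 1, Real.sin ((c:ℝ) * π * y) * Real.sin ((d:ℝ) * π * y)) := by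
  rw [Measure.volume_eq_prod]
  exact setIntegral_prod_mul (L := ℝ)
    (fun x => Real.sin ((a:ℝ) * π * x) * Real.sin ((b:ℝ) * π * x))
    (fun y => Real.sin ((c:ℝ) * π * y) * Real.sin ((d:ℝ) * π * y)) _ _

lemma sq_zero (a b c d : ℕ) (h : a ≠ b ∨ c ≠ d) :
    ∫ p in (Set.Ioo (0:ℝ) 1) ×ˢ (Set.Ioo (0:ℝ) 1),
      (Real.sin ((a:ℝ) * π * p.1) * Real.sin ((b:ℝ) * π * p.1)) *
      (Real.sin ((c:ℝ) * π * p.2) * Real.sin ((d:ℝ) * π * p.2)) = 0 := by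
  rw [sq_int]
  rcases h with h | h
  · rw [orth h, zero_mul]
  · rw [orth h, mul_zero]

lemma intOn (F : ℝ × ℝ → ℝ) (hF : Continuous F) (S : Set (ℝ × ℝ))
    (hS : S ⊆ Set.Icc (0:ℝ) 1 ×ˢ Set.Icc (0:ℝ) 1) : IntegrableOn F S := by
  have : IntegrableOn F (Set.Icc (0:ℝ) 1 ×ˢ Set.Icc (0:ℝ) 1) :=
    hF.continuousOn.integrableOn_compact (isCompact_Icc.prod isCompact_Icc)
  exact this.mono_set hS

noncomputable def Wf (a b : ℕ) (p : ℝ × ℝ) : ℝ :=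
  Real.sin ((a:ℝ) * π * p.1) * Real.sin ((b:ℝ) * π * p.2) -
  Real.sin ((b:ℝ) * π * (1 - p.1)) * Real.sin ((a:ℝ) * π * (1 - p.2))

lemma Wf_cont (a b : ℕ) : Continuous (Wf a b) := by unfold Wf; fun_prop

lemma Wf_expand (a b : ℕ) (p : ℝ × ℝ) : Wf a b p =
    Real.sin ((a:ℝ) * π * p.1) * Real.sin ((b:ℝ) * π * p.2) -
    (-1:ℝ)^(a+b) * (Real.sin ((b:ℝ) * π * p.1) * Real.sin ((a:ℝ) * π * p.2)) := by
  unfold Wf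
  rw [show (b:ℝ) * π * (1 - p.1) = (b:ℝ) * π - (b:ℝ) * π * p.1 by ring,
      show (a:ℝ) * π * (1 - p.2) = (a:ℝ) * π - (a:ℝ) * π * p.2 by ring,
      Real.sin_nat_mul_pi_sub, Real.sin_nat_mul_pi_sub]
  ring

def sg (p : ℝ × ℝ) : ℝ × ℝ := (1 - p.2, 1 - p.1)

lemma sg_cont : Continuous sg := by unfold sg; fun_prop

lemma sg_invol : Function.Involutive sg := fun p => by simp [sg]

lemma Wf_sg (a b : ℕ) (p : ℝ × ℝ) : Wf a b (sg p) = - Wf a b p := by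
  simp only [Wf, sg, sub_sub_cancel]
  ring

noncomputable def sgE : (ℝ × ℝ) ≃ᵐ (ℝ × ℝ) :=
{ toEquiv := Equiv.mk sg sg (fun p => sg_invol p) (fun p => sg_invol p),
  measurable_toFun := sg_cont.measurable,
  measurable_invFun := sg_cont.measurable }

lemma sg_emb : MeasurableEmbedding sg := sgE.measurableEmbedding

lemma sg_mp : MeasurePreserving sg volume volume := by
  have h1 : MeasurePreserving (fun x : ℝ => 1 - x) volume volume := by
    have h := (measurePreserving_add_left (volume : Measure ℝ) 1).comp
      (Measure.measurePreserving_neg (volume : Measure ℝ))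
    have he : (fun x : ℝ => 1 - x) = (fun x : ℝ => 1 + x) ∘ Neg.neg := by
      funext x; simp [sub_eq_add_neg]
    rwa [← he] at h
  have hswap : MeasurePreserving (Prod.swap : ℝ × ℝ → ℝ × ℝ) volume volume := by
    rw [Measure.volume_eq_prod]
    exact Measure.measurePreserving_swap
  have hprod : MeasurePreserving (Prod.map (fun x : ℝ => 1 - x) (fun x : ℝ => 1 - x))
      volume volume := by
    rw [Measure.volume_eq_prod]
    exact h1.prod h1
  exact hprod.comp hswap

lemma line_null : volume {q : ℝ × ℝ | q.1 + q.2 = 1} = 0 := by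
  have hm : MeasurableSet {q : ℝ × ℝ | q.1 + q.2 = 1} :=
    (isClosed_eq (by fun_prop) continuous_const).measurableSet
  rw [Measure.volume_eq_prod, Measure.prod_apply hm]
  have hx : ∀ x : ℝ, (volume : Measure ℝ) {a : ℝ | x + a = 1} = 0 := by
    intro x
    have : {a : ℝ | x + a = 1} = {1 - x} := by
      ext y; simp only [Set.mem_setOf_eq, Set.mem_singleton_iff]
      constructor <;> intro h <;> linarith
    rw [this]
    exact measure_singleton _
  simp only [Set.preimage_setOf_eq]
  simp [hx]

lemma square_int (j s j' s' : ℕ) (hjs : j < s) (hjs' : j' < s') (hne : ¬(j = j' ∧ s = s')) :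
    ∫ p in (Set.Ioo (0:ℝ) 1) ×ˢ (Set.Ioo (0:ℝ) 1), Wf j s p * Wf j' s' p = 0 := by
  have hexp : ∀ p : ℝ × ℝ, Wf j s p * Wf j' s' p =
      (Real.sin ((j:ℝ) * π * p.1) * Real.sin ((j':ℝ) * π * p.1)) *
        (Real.sin ((s:ℝ) * π * p.2) * Real.sin ((s':ℝ) * π * p.2))
      - (-1:ℝ)^(j'+s') * ((Real.sin ((j:ℝ) * π * p.1) * Real.sin ((s':ℝ) * π * p.1)) *
        (Real.sin ((s:ℝ) * π * p.2) * Real.sin ((j':ℝ) * π * p.2)))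
      - (-1:ℝ)^(j+s) * ((Real.sin ((s:ℝ) * π * p.1) * Real.sin ((j':ℝ) * π * p.1)) *
        (Real.sin ((j:ℝ) * π * p.2) * Real.sin ((s':ℝ) * π * p.2)))
      + ((-1:ℝ)^(j+s) * (-1:ℝ)^(j'+s')) * ((Real.sin ((s:ℝ) * π * p.1) *
        Real.sin ((s':ℝ) * π * p.1)) *
        (Real.sin ((j:ℝ) * π * p.2) * Real.sin ((j':ℝ) * π * p.2))) := by
    intro p
    rw [Wf_expand, Wf_expand]
    ring
  simp only [hexp]
  have hI : ∀ a b c d : ℕ, IntegrableOn (fun p : ℝ × ℝ =>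
      (Real.sin ((a:ℝ) * π * p.1) * Real.sin ((b:ℝ) * π * p.1)) *
      (Real.sin ((c:ℝ) * π * p.2) * Real.sin ((d:ℝ) * π * p.2)))
      ((Set.Ioo (0:ℝ) 1) ×ˢ (Set.Ioo (0:ℝ) 1)) := by
    intro a b c d
    exact intOn _ (by fun_prop) _
      (Set.prod_mono Set.Ioo_subset_Icc_self Set.Ioo_subset_Icc_self)
  have i1 : IntegrableOn (fun p : ℝ × ℝ =>
      (Real.sin ((j:ℝ) * π * p.1) * Real.sin ((j':ℝ) * π * p.1)) *
      (Real.sin ((s:ℝ) * π * p.2) * Real.sin ((s':ℝ) * π * p.2)))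
      ((Set.Ioo (0:ℝ) 1) ×ˢ (Set.Ioo (0:ℝ) 1)) := hI j j' s s'
  have i2 : IntegrableOn (fun p : ℝ × ℝ => (-1:ℝ)^(j'+s') *
      ((Real.sin ((j:ℝ) * π * p.1) * Real.sin ((s':ℝ) * π * p.1)) *
      (Real.sin ((s:ℝ) * π * p.2) * Real.sin ((j':ℝ) * π * p.2))))
      ((Set.Ioo (0:ℝ) 1) ×ˢ (Set.Ioo (0:ℝ) 1)) := (hI j s' s j').const_mul _
  have i3 : IntegrableOn (fun p : ℝ × ℝ => (-1:ℝ)^(j+s) *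
      ((Real.sin ((s:ℝ) * π * p.1) * Real.sin ((j':ℝ) * π * p.1)) *
      (Real.sin ((j:ℝ) * π * p.2) * Real.sin ((s':ℝ) * π * p.2))))
      ((Set.Ioo (0:ℝ) 1) ×ˢ (Set.Ioo (0:ℝ) 1)) := (hI s j' j s').const_mul _
  have i4 : IntegrableOn (fun p : ℝ × ℝ => ((-1:ℝ)^(j+s) * (-1:ℝ)^(j'+s')) *
      ((Real.sin ((s:ℝ) * π * p.1) * Real.sin ((s':ℝ) * π * p.1)) *
      (Real.sin ((j:ℝ) * π * p.2) * Real.sin ((j':ℝ) * π * p.2))))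
      ((Set.Ioo (0:ℝ) 1) ×ˢ (Set.Ioo (0:ℝ) 1)) := (hI s s' j j').const_mul _
  have i12 : IntegrableOn (fun p : ℝ × ℝ =>
      (Real.sin ((j:ℝ) * π * p.1) * Real.sin ((j':ℝ) * π * p.1)) *
      (Real.sin ((s:ℝ) * π * p.2) * Real.sin ((s':ℝ) * π * p.2)) -
      (-1:ℝ)^(j'+s') * ((Real.sin ((j:ℝ) * π * p.1) * Real.sin ((s':ℝ) * π * p.1)) *
      (Real.sin ((s:ℝ) * π * p.2) * Real.sin ((j':ℝ) * π * p.2))))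
      ((Set.Ioo (0:ℝ) 1) ×ˢ (Set.Ioo (0:ℝ) 1)) := i1.sub i2
  have i123 : IntegrableOn (fun p : ℝ × ℝ =>
      (Real.sin ((j:ℝ) * π * p.1) * Real.sin ((j':ℝ) * π * p.1)) *
      (Real.sin ((s:ℝ) * π * p.2) * Real.sin ((s':ℝ) * π * p.2)) -
      (-1:ℝ)^(j'+s') * ((Real.sin ((j:ℝ) * π * p.1) * Real.sin ((s':ℝ) * π * p.1)) *
      (Real.sin ((s:ℝ) * π * p.2) * Real.sin ((j':ℝ) * π * p.2))) -
      (-1:ℝ)^(j+s) * ((Real.sin ((s:ℝ) * π * p.1) * Real.sin ((j':ℝ) * π * p.1)) *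
      (Real.sin ((j:ℝ) * π * p.2) * Real.sin ((s':ℝ) * π * p.2))))
      ((Set.Ioo (0:ℝ) 1) ×ˢ (Set.Ioo (0:ℝ) 1)) := i12.sub i3
  rw [integral_add i123 i4, integral_sub i12 i3, integral_sub i1 i2,
      integral_const_mul, integral_const_mul, integral_const_mul]
  rw [sq_zero j j' s s' (by omega), sq_zero j s' s j' (by omega),
      sq_zero s j' j s' (by omega), sq_zero s s' j j' (by omega)]
  ring

end Stmt16Aux

open Stmt16Aux

theorem stmt16 (j s j' s' : ℕ) (hj : 0 < j) (hj' : 0 < j')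
    (hjs : j < s) (hjs' : j' < s') (hne : (j, s) ≠ (j', s')) :
    ∫ p in {q : ℝ × ℝ | 0 < q.1 ∧ 0 < q.2 ∧ q.1 + q.2 < 1},
      (Real.sin ((j:ℝ) * π * p.1) * Real.sin ((s:ℝ) * π * p.2) -
       Real.sin ((s:ℝ) * π * (1 - p.1)) * Real.sin ((j:ℝ) * π * (1 - p.2))) *
      (Real.sin ((j':ℝ) * π * p.1) * Real.sin ((s':ℝ) * π * p.2) -
       Real.sin ((s':ℝ) * π * (1 - p.1)) * Real.sin ((j':ℝ) * π * (1 - p.2))) = 0 := by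
  show ∫ p in {q : ℝ × ℝ | 0 < q.1 ∧ 0 < q.2 ∧ q.1 + q.2 < 1}, Wf j s p * Wf j' s' p = 0
  have hfcont : Continuous (fun p => Wf j s p * Wf j' s' p) := (Wf_cont j s).mul (Wf_cont j' s')
  have hTsub : {q : ℝ × ℝ | 0 < q.1 ∧ 0 < q.2 ∧ q.1 + q.2 < 1} ⊆
      (Set.Ioo (0:ℝ) 1) ×ˢ (Set.Ioo (0:ℝ) 1) := by
    rintro ⟨x, y⟩ ⟨h1, h2, h3⟩
    simp only at h1 h2 h3
    exact ⟨⟨h1, by linarith⟩, ⟨h2, by linarith⟩⟩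
  have hT'sub : {q : ℝ × ℝ | q.1 < 1 ∧ q.2 < 1 ∧ 1 < q.1 + q.2} ⊆
      (Set.Ioo (0:ℝ) 1) ×ˢ (Set.Ioo (0:ℝ) 1) := by
    rintro ⟨x, y⟩ ⟨h1, h2, h3⟩
    simp only at h1 h2 h3
    exact ⟨⟨by linarith, h1⟩, ⟨by linarith, h2⟩⟩
  have hIccsub : (Set.Ioo (0:ℝ) 1) ×ˢ (Set.Ioo (0:ℝ) 1) ⊆
      Set.Icc (0:ℝ) 1 ×ˢ Set.Icc (0:ℝ) 1 :=
    Set.prod_mono Set.Ioo_subset_Icc_self Set.Ioo_subset_Icc_self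
  have hIntT : IntegrableOn (fun p => Wf j s p * Wf j' s' p)
      {q : ℝ × ℝ | 0 < q.1 ∧ 0 < q.2 ∧ q.1 + q.2 < 1} :=
    intOn _ hfcont _ (hTsub.trans hIccsub)
  have hIntT' : IntegrableOn (fun p => Wf j s p * Wf j' s' p)
      {q : ℝ × ℝ | q.1 < 1 ∧ q.2 < 1 ∧ 1 < q.1 + q.2} :=
    intOn _ hfcont _ (hT'sub.trans hIccsub)
  have hT'open : IsOpen {q : ℝ × ℝ | q.1 < 1 ∧ q.2 < 1 ∧ 1 < q.1 + q.2} := by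
    rw [Set.setOf_and, Set.setOf_and]
    exact (isOpen_lt continuous_fst continuous_const).inter
      ((isOpen_lt continuous_snd continuous_const).inter
        (isOpen_lt continuous_const (continuous_fst.add continuous_snd)))
  have hdisj : Disjoint {q : ℝ × ℝ | 0 < q.1 ∧ 0 < q.2 ∧ q.1 + q.2 < 1}
      {q : ℝ × ℝ | q.1 < 1 ∧ q.2 < 1 ∧ 1 < q.1 + q.2} := by
    rw [Set.disjoint_left]
    rintro ⟨x, y⟩ ⟨_, _, h3⟩ ⟨_, _, h3'⟩
    simp only at h3 h3'
    linarith
  have hae : ((Set.Ioo (0:ℝ) 1) ×ˢ (Set.Ioo (0:ℝ) 1) : Set (ℝ × ℝ)) =ᵐ[volume]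
      (({q : ℝ × ℝ | 0 < q.1 ∧ 0 < q.2 ∧ q.1 + q.2 < 1} ∪
       {q : ℝ × ℝ | q.1 < 1 ∧ q.2 < 1 ∧ 1 < q.1 + q.2} : Set (ℝ × ℝ))) := by
    rw [ae_eq_set]
    constructor
    · apply measure_mono_null _ line_null
      rintro ⟨x, y⟩ ⟨⟨⟨hx0, hx1⟩, hy0, hy1⟩, hnot⟩
      simp only [Set.mem_union, Set.mem_setOf_eq, not_or] at hnot
      push_neg at hnot
      have h1 := hnot.1 hx0 hy0
      have h2 := hnot.2 hx1 hy1
      show x + y = 1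
      linarith
    · rw [Set.diff_eq_empty.mpr (Set.union_subset hTsub hT'sub)]
      exact measure_empty
  have himg : sg '' {q : ℝ × ℝ | 0 < q.1 ∧ 0 < q.2 ∧ q.1 + q.2 < 1} =
      {q : ℝ × ℝ | q.1 < 1 ∧ q.2 < 1 ∧ 1 < q.1 + q.2} := by
    rw [Set.image_eq_preimage_of_inverse (fun p => sg_invol p) (fun p => sg_invol p)]
    ext ⟨x, y⟩
    simp only [Set.mem_preimage, Set.mem_setOf_eq, sg]
    constructor <;> rintro ⟨h1, h2, h3⟩ <;> exact ⟨by linarith, by linarith, by linarith⟩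
  have hmapT' : ∫ p in {q : ℝ × ℝ | q.1 < 1 ∧ q.2 < 1 ∧ 1 < q.1 + q.2},
      Wf j s p * Wf j' s' p =
      ∫ p in {q : ℝ × ℝ | 0 < q.1 ∧ 0 < q.2 ∧ q.1 + q.2 < 1}, Wf j s p * Wf j' s' p := by
    rw [← himg, sg_mp.setIntegral_image_emb sg_emb (fun p => Wf j s p * Wf j' s' p)]
    congr 1
    funext p
    rw [Wf_sg, Wf_sg]
    ring
  have hsq0 : ∫ p in (Set.Ioo (0:ℝ) 1) ×ˢ (Set.Ioo (0:ℝ) 1), Wf j s p * Wf j' s' p = 0 :=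
    square_int j s j' s' hjs hjs' (by simpa [Prod.ext_iff] using hne)
  have hsplit : ∫ p in (Set.Ioo (0:ℝ) 1) ×ˢ (Set.Ioo (0:ℝ) 1), Wf j s p * Wf j' s' p =
      (∫ p in {q : ℝ × ℝ | 0 < q.1 ∧ 0 < q.2 ∧ q.1 + q.2 < 1}, Wf j s p * Wf j' s' p) +
      ∫ p in {q : ℝ × ℝ | q.1 < 1 ∧ q.2 < 1 ∧ 1 < q.1 + q.2}, Wf j s p * Wf j' s' p := by
    rw [setIntegral_congr_set hae]
    exact setIntegral_union hdisj hT'open.measurableSet hIntT hIntT'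
  rw [hsq0, hmapT'] at hsplit
  linarith
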